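/- Let w ∈ (0,1), α > 0, and let L(α,w) := max{ −(t₃+t₄α²+t₅α)/(s₁+s₂α²+s₃α), −(t₆α²+t₇α)/(s₄α²+s₅α), −(t₈+t₉α²+t₁₀α)/(s₆+s₇α²+s₈α) } and U(α,w) := min{ 0, −(t₁α²+t₂α)/(r₄α²+r₅α) }, with the polynomials listed below. Then: if α ∈ (0,1] and w ∈ (0,1/2], then L < −0.2 and −0.018 < U; if α ∈ (0,1] and w ∈ [1/2,1), then L < −0.04 and U = 0; if α ∈ [1,∞) and w ∈ (0,1/2], then L < 0 and U = 0; if α ∈ [1,∞) and w ∈ [1/2,1), then L < −0.1 and −0.012 < U. In particular, the interval [L,U] contains [−0.2,−0.018], [−0.04,0], {0}, and [−0.1,−0.012] in the respective four cases. -/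
import Mathlib

noncomputable def r4 (w : ℝ) : ℝ := 4*(2*w^3+w+3)
noncomputable def r5 (w : ℝ) : ℝ := 4*(-2*w^3-w+3)
noncomputable def s1 (w : ℝ) : ℝ := 6*(-w^2+2*w-1)
noncomputable def s2 (w : ℝ) : ℝ := -6*(w^2+2*w+1)
noncomputable def s3 (w : ℝ) : ℝ := 12*(w^2-1)
noncomputable def s4 (w : ℝ) : ℝ := 4*(-4*w^3+w-3)
noncomputable def s5 (w : ℝ) : ℝ := 4*(4*w^3-w-3)
noncomputable def s6 (w : ℝ) : ℝ := 12*(-2*w^3+3*w^2-1)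
noncomputable def s7 (w : ℝ) : ℝ := 4*(-2*w^3-3*w^2-w)
noncomputable def s8 (w : ℝ) : ℝ := 4*(8*w^3-6*w^2+w-3)
noncomputable def t1 (w : ℝ) : ℝ := -4*w^3+6*w^2-2*w
noncomputable def t2 (w : ℝ) : ℝ := 4*w^3-6*w^2+2*w
noncomputable def t3 (w : ℝ) : ℝ := -6*w^3+9*w^2-3
noncomputable def t4 (w : ℝ) : ℝ := -2*w^3-3*w^2-w
noncomputable def t5 (w : ℝ) : ℝ := 8*w^3-6*w^2+w-3
noncomputable def t6 (w : ℝ) : ℝ := 8*w^3-12*w^2-2*w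
noncomputable def t7 (w : ℝ) : ℝ := -8*w^3+12*w^2+2*w-6
noncomputable def t8 (w : ℝ) : ℝ := 6*(-w^2+2*w-1)
noncomputable def t9 (w : ℝ) : ℝ := -6*w^2
noncomputable def t10 (w : ℝ) : ℝ := 12*(w^2-w)

/-- the lower endpoint of the admissible `ρ` interval. -/
noncomputable def Lend (α w : ℝ) : ℝ :=
  max (max (-(t3 w + t4 w * α^2 + t5 w * α) / (s1 w + s2 w * α^2 + s3 w * α))
        (-(t6 w * α^2 + t7 w * α) / (s4 w * α^2 + s5 w * α)))
      (-(t8 w + t9 w * α^2 + t10 w * α) / (s6 w + s7 w * α^2 + s8 w * α))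

/-- the upper endpoint of the admissible `ρ` interval. -/
noncomputable def Uend (α w : ℝ) : ℝ :=
  min 0 (-(t1 w * α^2 + t2 w * α) / (r4 w * α^2 + r5 w * α))

set_option maxHeartbeats 2000000 in
theorem stmt8 (w α : ℝ) (hw : w ∈ Set.Ioo (0 : ℝ) 1) (hα : 0 < α) :
    (α ≤ 1 → w ≤ 1/2 → Lend α w < -0.2 ∧ -0.018 < Uend α w) ∧
    (α ≤ 1 → 1/2 ≤ w → Lend α w < -0.04 ∧ Uend α w = 0) ∧
    (1 ≤ α → w ≤ 1/2 → Lend α w < 0 ∧ Uend α w = 0) ∧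
    (1 ≤ α → 1/2 ≤ w → Lend α w < -0.1 ∧ -0.012 < Uend α w) := by
  obtain ⟨hw0, hw1⟩ := hw
  -- denominator signs
  have hDA : s1 w + s2 w * α^2 + s3 w * α < 0 := by
    simp only [s1, s2, s3]
    have hx : (0:ℝ) < (1-w)+(1+w)*α := by nlinarith
    nlinarith [mul_pos hx hx]
  have hDB : s4 w * α^2 + s5 w * α < 0 := by
    simp only [s4, s5]
    have h1 : (0:ℝ) < 4*w^3-w+3 := by nlinarith [pow_pos hw0 3]
    have h2 : (0:ℝ) < 3+w-4*w^3 := by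
      nlinarith [mul_pos (sub_pos.2 hw1) (show (0:ℝ) < 4*w^2+4*w+3 by positivity)]
    nlinarith [mul_pos (mul_pos hα hα) h1, mul_pos hα h2]
  have hDC : s6 w + s7 w * α^2 + s8 w * α < 0 := by
    simp only [s6, s7, s8]
    nlinarith [mul_pos hα hα, sq_nonneg (1-w), mul_pos hw0 hα, mul_pos (mul_pos hw0 hw0) hw0,
      mul_pos hα (mul_pos hw0 hw0), sq_nonneg ((1-w)*α)]
  have hDU : 0 < r4 w * α^2 + r5 w * α := by
    simp only [r4, r5]
    have h2 : (0:ℝ) < 3-w-2*w^3 := by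
      nlinarith [mul_pos (sub_pos.2 hw1) (show (0:ℝ) < 2*w^2+2*w+3 by positivity)]
    nlinarith [mul_pos (mul_pos hα hα) (show (0:ℝ) < 2*w^3+w+3 by positivity), mul_pos hα h2]
  -- numerator positivity
  have hNA : 0 < -(t3 w + t4 w * α^2 + t5 w * α) := by
    simp only [t3, t4, t5]
    nlinarith [mul_pos hα hα, sq_nonneg (1-w), mul_pos hw0 hα, mul_pos hα (mul_pos hw0 hw0),
      sq_nonneg ((1-w)*α)]
  have hNB : 0 < -(t6 w * α^2 + t7 w * α) := by
    simp only [t6, t7]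
    have h1 : (0:ℝ) < -(8*w^3-12*w^2-2*w) := by nlinarith [mul_pos hw0 (mul_pos hw0 hw0)]
    have h2 : (0:ℝ) < -(-8*w^3+12*w^2+2*w-6) := by
      nlinarith [mul_pos (sub_pos.2 hw1)
        (show (0:ℝ) < 3+2*w-4*w^2 by nlinarith [mul_pos hw0 (sub_pos.2 hw1)])]
    nlinarith [mul_pos (mul_pos hα hα) h1, mul_pos hα h2]
  have hNC : 0 < -(t8 w + t9 w * α^2 + t10 w * α) := by
    simp only [t8, t9, t10]
    nlinarith [sq_nonneg ((1-w) - w*α), mul_pos hw0 hα, mul_pos hα hα]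
  refine ⟨fun hα1 hw2 => ?_, fun hα1 h2w => ?_, fun h1α hw2 => ?_, fun h1α h2w => ?_⟩
  · constructor
    · rw [Lend]
      refine max_lt (max_lt ?_ ?_) ?_
      · rw [div_lt_iff_of_neg hDA]
        simp only [s1, s2, s3, t3, t4, t5]
        nlinarith [mul_nonneg (mul_nonneg (sub_nonneg.2 hα1) hα.le) hw0.le, sq_nonneg (1-α),
          mul_nonneg (sub_nonneg.2 hα1) hα.le, mul_pos hα hα, mul_pos hw0 hα,
          mul_nonneg (mul_nonneg (sub_nonneg.2 hα1) hα.le) (sub_nonneg.2 hw2),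
          mul_nonneg (sub_nonneg.2 hw1.le) hα.le,
          mul_nonneg (mul_nonneg hw0.le hw0.le) (mul_pos hα hα).le]
      · rw [div_lt_iff_of_neg hDB]
        simp only [s4, s5, t6, t7]
        nlinarith [mul_nonneg (mul_nonneg (sub_nonneg.2 hα1) hα.le) hw0.le, mul_pos hα hα,
          mul_nonneg (mul_nonneg (sub_nonneg.2 hα1) hα.le) (sub_nonneg.2 hw2),
          mul_nonneg (mul_nonneg (sub_nonneg.2 hα1) hα.le) (mul_nonneg hw0.le hw0.le),
          mul_pos hα (mul_pos hw0 hw0), mul_nonneg (mul_nonneg hw0.le (sub_nonneg.2 hw2)) hα.le,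
          mul_nonneg (mul_nonneg hw0.le (sub_nonneg.2 hw2)) (mul_pos hα hα).le]
      · rw [div_lt_iff_of_neg hDC]
        simp only [s6, s7, s8, t8, t9, t10]
        nlinarith [mul_nonneg (mul_nonneg (sub_nonneg.2 hα1) hα.le) hw0.le, mul_pos hα hα,
          mul_nonneg (mul_nonneg (sub_nonneg.2 hα1) hα.le) (sub_nonneg.2 hw2),
          mul_nonneg (sub_nonneg.2 hα1) hα.le, sq_nonneg (1-α), mul_pos hw0 hα,
          mul_nonneg (mul_nonneg hw0.le (sub_nonneg.2 hw2)) hα.le,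
          mul_nonneg (mul_nonneg hw0.le (sub_nonneg.2 hw2)) (mul_pos hα hα).le,
          mul_nonneg (mul_nonneg hw0.le hw0.le) (mul_pos hα hα).le]
    · rw [Uend]
      refine lt_min (by norm_num) ?_
      rw [lt_div_iff₀ hDU]
      simp only [r4, r5, t1, t2]
      have key : 518*w^3-750*w^2+259*w-27 ≤ 0 := by
        nlinarith [sq_nonneg (w-21/100), mul_nonneg (sub_nonneg.2 hw2) (sq_nonneg (w-21/100)),
          mul_nonneg hw0.le (sq_nonneg (w-21/100)), mul_nonneg hw0.le (sub_nonneg.2 hw2),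
          sq_nonneg w]
      have hmt1 : 0 ≤ 4*w^3-6*w^2+2*w := by
        nlinarith [mul_nonneg (mul_nonneg hw0.le (sub_nonneg.2 hw2))
          (sub_nonneg.2 hw1.le)]
      nlinarith [mul_nonneg (by linarith :
          (0:ℝ) ≤ (9/500)*(4*(-2*w^3-w+3)) + (-4*w^3+6*w^2-2*w)) hα.le,
        mul_pos (mul_pos hα hα) (show (0:ℝ) < 2*w^3+w+3 by positivity),
        mul_nonneg hmt1 (mul_pos hα hα).le]
  · constructor
    · rw [Lend]
      refine max_lt (max_lt ?_ ?_) ?_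
      · rw [div_lt_iff_of_neg hDA]
        simp only [s1, s2, s3, t3, t4, t5]
        nlinarith [mul_pos hα hα, mul_pos hw0 (mul_pos hα hα), sq_nonneg (1-w),
          mul_nonneg (sub_nonneg.2 h2w) (mul_pos hα hα).le,
          mul_nonneg (sub_nonneg.2 hw1.le) hα.le,
          mul_nonneg (mul_nonneg (sub_nonneg.2 hw1.le) (sub_nonneg.2 hw1.le)) hw0.le]
      · rw [div_lt_iff_of_neg hDB]
        simp only [s4, s5, t6, t7]
        nlinarith [mul_nonneg (mul_nonneg (sub_nonneg.2 hα1) hα.le) hw0.le, mul_pos hα hα,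
          mul_nonneg (mul_nonneg (sub_nonneg.2 hα1) hα.le) (sub_nonneg.2 h2w),
          mul_pos hα (mul_pos hw0 hw0), mul_nonneg (sub_nonneg.2 hw1.le) hα.le,
          mul_nonneg (mul_nonneg (sub_nonneg.2 hw1.le) (sub_nonneg.2 h2w)) hα.le,
          mul_nonneg (mul_nonneg (sub_nonneg.2 hw1.le) (sub_nonneg.2 h2w)) (mul_pos hα hα).le,
          mul_nonneg (mul_nonneg (sub_nonneg.2 hw1.le) hw0.le) (mul_pos hα hα).le]
      · rw [div_lt_iff_of_neg hDC]
        simp only [s6, s7, s8, t8, t9, t10]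
        nlinarith [mul_pos hα hα, sq_nonneg (1-w),
          mul_nonneg (sub_nonneg.2 h2w) (mul_pos hα hα).le,
          mul_nonneg (mul_nonneg (sub_nonneg.2 h2w) (sub_nonneg.2 h2w)) (mul_pos hα hα).le,
          mul_nonneg (mul_nonneg (sub_nonneg.2 hw1.le) hw0.le) hα.le,
          mul_nonneg (mul_nonneg (sub_nonneg.2 hw1.le) (sub_nonneg.2 h2w)) hα.le,
          mul_nonneg (mul_nonneg (sub_nonneg.2 hw1.le) (sub_nonneg.2 hw1.le)) hw0.le]
    · rw [Uend]
      refine min_eq_left (div_nonneg ?_ hDU.le)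
      simp only [t1, t2]
      nlinarith [mul_nonneg (mul_nonneg (mul_nonneg (sub_nonneg.2 hα1) hα.le)
        (mul_nonneg (sub_nonneg.2 h2w) (sub_nonneg.2 hw1.le))) (le_trans (by norm_num) h2w)]
  · constructor
    · rw [Lend]
      refine max_lt (max_lt ?_ ?_) ?_
      · exact div_neg_of_pos_of_neg hNA hDA
      · exact div_neg_of_pos_of_neg hNB hDB
      · exact div_neg_of_pos_of_neg hNC hDC
    · rw [Uend]
      refine min_eq_left (div_nonneg ?_ hDU.le)
      simp only [t1, t2]
      nlinarith [mul_nonneg (mul_nonneg (mul_nonneg (sub_nonneg.2 h1α) hα.le)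
        (mul_nonneg (sub_nonneg.2 hw2) hw0.le)) (by linarith : (0:ℝ) ≤ 1 - w)]
  · constructor
    · rw [Lend]
      refine max_lt (max_lt ?_ ?_) ?_
      · rw [div_lt_iff_of_neg hDA]
        simp only [s1, s2, s3, t3, t4, t5]
        nlinarith [mul_pos hα hα, sq_nonneg (1-w),
          mul_nonneg (mul_nonneg (sub_nonneg.2 h2w) (sub_nonneg.2 h2w)) (mul_pos hα hα).le,
          mul_nonneg (sub_nonneg.2 h2w) (mul_pos hα hα).le,
          mul_nonneg (sub_nonneg.2 hw1.le) hα.le,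
          mul_nonneg (mul_nonneg (sub_nonneg.2 hw1.le) (sub_nonneg.2 hw1.le)) hw0.le,
          mul_nonneg (mul_nonneg (sub_nonneg.2 hw1.le) hw0.le) hα.le]
      · rw [div_lt_iff_of_neg hDB]
        simp only [s4, s5, t6, t7]
        have hcoef : 0 ≤ -48*w^3+60*w^2+12*w-6 := by
          nlinarith [mul_nonneg (sub_nonneg.2 h2w) (sub_nonneg.2 hw1.le),
            mul_nonneg (mul_nonneg (sub_nonneg.2 h2w) (sub_nonneg.2 h2w)) (sub_nonneg.2 hw1.le)]
        nlinarith [mul_nonneg (mul_nonneg (sub_nonneg.2 h1α) hα.le) hcoef, hα]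
      · rw [div_lt_iff_of_neg hDC]
        simp only [s6, s7, s8, t8, t9, t10]
        nlinarith [mul_pos hα hα, sq_nonneg (1-w),
          mul_nonneg (sub_nonneg.2 h2w) (mul_pos hα hα).le,
          mul_nonneg (mul_nonneg (sub_nonneg.2 h2w) (sub_nonneg.2 h2w)) (mul_pos hα hα).le,
          mul_nonneg (mul_nonneg (sub_nonneg.2 hw1.le) hw0.le) hα.le,
          mul_nonneg (mul_nonneg (sub_nonneg.2 hw1.le) (sub_nonneg.2 h2w)) hα.le,
          mul_nonneg (mul_nonneg (sub_nonneg.2 hw1.le) (sub_nonneg.2 hw1.le)) hw0.le]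
    · rw [Uend]
      refine lt_min (by norm_num) ?_
      rw [lt_div_iff₀ hDU]
      simp only [r4, r5, t1, t2]
      have key : 0 ≤ 512*w^3-750*w^2+256*w+18 := by
        nlinarith [sq_nonneg (w-79/100), mul_nonneg (sub_nonneg.2 h2w) (sq_nonneg (w-79/100)),
          mul_nonneg (sub_nonneg.2 hw1.le) (sq_nonneg (w-79/100)),
          mul_nonneg (sub_nonneg.2 h2w) (sub_nonneg.2 hw1.le)]
      have ht1 : 0 ≤ -4*w^3+6*w^2-2*w := by
        nlinarith [mul_nonneg (mul_nonneg (le_trans (by norm_num) h2w) (sub_nonneg.2 h2w))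
          (sub_nonneg.2 hw1.le)]
      have h2 : (0:ℝ) < 3-w-2*w^3 := by
        nlinarith [mul_pos (sub_pos.2 hw1) (show (0:ℝ) < 2*w^2+2*w+3 by positivity)]
      nlinarith [mul_nonneg (by linarith :
          (0:ℝ) ≤ (3/250)*(4*(2*w^3+w+3)) - (-4*w^3+6*w^2-2*w)) (mul_pos hα hα).le,
        mul_pos hα h2, mul_nonneg ht1 hα.le]
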